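/- arXiv:2001.01776 — 3 statements merged into one kernel-verified Lean document; each statement's English description precedes it below -/
import Mathlib

section
/- Let G = (V, E, d, w) be a locally finite weighted graph. For any two vertices u, v ∈ V with u ≠ v, the Lin–Lu–Yau Ricci curvature admits the limit-free representation κ(u, v) = (1/d(u,v)) · sup_B Σ_{x,y ∈ V} B(x,y) d(x,y), where the supremum is taken over all ∗-couplings B between μ_u and μ_v. -/
open Filter Finset
open scoped Classical

namespace RicciWeighted

variable {V : Type*}

/-- The length of a walk with respect to an edge-length function `d`:
the sum of the lengths of its edges. -/
noncomputable def walkLength (G : SimpleGraph V) (d : V → V → ℝ) {x y : V}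
    (p : G.Walk x y) : ℝ :=
  (p.darts.map fun e => d e.toProd.1 e.toProd.2).sum

/-- `d x y` is the shortest weighted path distance between `x` and `y`
(i.e. the greatest lower bound of the lengths of walks joining them). -/
def IsShortestDist (G : SimpleGraph V) (d : V → V → ℝ) : Prop :=
  ∀ x y : V, IsGLB {r : ℝ | ∃ p : G.Walk x y, walkLength G d p = r} (d x y)

/-- The total weight `D_x = ∑_{y ∼ x} w_{x y}` at a vertex `x`. -/
noncomputable def deg (G : SimpleGraph V) [∀ v : V, Fintype (G.neighborSet v)]
    (w : V → V → ℝ) (x : V) : ℝ :=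
  ∑ y ∈ G.neighborFinset x, w x y

/-- The random-walk probability distribution `μ_x^α`. -/
noncomputable def mu (G : SimpleGraph V) [∀ v : V, Fintype (G.neighborSet v)]
    (w : V → V → ℝ) (α : ℝ) (x : V) : V → ℝ :=
  fun z => if z = x then α else if G.Adj x z then (1 - α) * w x z / deg G w x else 0

/-- A coupling between two finitely supported distributions `μ₁` and `μ₂`. -/
structure IsCoupling (μ₁ μ₂ : V → ℝ) (A : V → V → ℝ) : Prop where
  mem_Icc : ∀ x y : V, A x y ∈ Set.Icc (0 : ℝ) 1
  finite_support : (Function.support fun p : V × V => A p.1 p.2).Finite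
  marginal_fst : ∀ x : V, ∑ᶠ y : V, A x y = μ₁ x
  marginal_snd : ∀ y : V, ∑ᶠ x : V, A x y = μ₂ y

/-- The transport cost `∑_{x,y} A(x,y) d(x,y)` of a plan `A`. -/
noncomputable def cost (d : V → V → ℝ) (A : V → V → ℝ) : ℝ :=
  ∑ᶠ p : V × V, A p.1 p.2 * d p.1 p.2

/-- The Wasserstein transportation distance between `μ₁` and `μ₂`. -/
noncomputable def W (d : V → V → ℝ) (μ₁ μ₂ : V → ℝ) : ℝ :=
  sInf {r : ℝ | ∃ A : V → V → ℝ, IsCoupling μ₁ μ₂ A ∧ cost d A = r}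

/-- The `α`-Ricci curvature `κ_α(x,y) = 1 - W(μ_x^α, μ_y^α)/d(x,y)`. -/
noncomputable def kappaAlpha (G : SimpleGraph V) [∀ v : V, Fintype (G.neighborSet v)]
    (d w : V → V → ℝ) (α : ℝ) (x y : V) : ℝ :=
  1 - W d (mu G w α x) (mu G w α y) / d x y

/-- `k` is the (Lin–Lu–Yau) Ricci curvature of the pair `(x, y)`:
the limit of `κ_α(x,y)/(1-α)` as `α → 1⁻`. -/
def IsRicci (G : SimpleGraph V) [∀ v : V, Fintype (G.neighborSet v)]
    (d w : V → V → ℝ) (x y : V) (k : ℝ) : Prop :=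
  Tendsto (fun α : ℝ => kappaAlpha G d w α x y / (1 - α))
    (nhdsWithin 1 (Set.Iio 1)) (nhds k)

/-- A `∗`-coupling between `μ_u` and `μ_v`. -/
structure IsStarCoupling (μu μv : V → ℝ) (u v : V) (B : V → V → ℝ) : Prop where
  pos : 0 < B u v
  nonpos : ∀ x y : V, (x, y) ≠ (u, v) → B x y ≤ 0
  finite_support : (Function.support fun p : V × V => B p.1 p.2).Finite
  sum_zero : ∑ᶠ p : V × V, B p.1 p.2 = 0
  marginal_fst : ∀ x : V, x ≠ u → ∑ᶠ y : V, B x y = -μu x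
  marginal_snd : ∀ y : V, y ≠ v → ∑ᶠ x : V, B x y = -μv y

/-- The `Treelike` property: for every edge `(x,y)` and every `k ∈ N(x)`, `l ∈ N(y)`,
`d(k,l) = d(k,x) + d(x,y) + d(y,l)`. -/
def Treelike (G : SimpleGraph V) (d : V → V → ℝ) : Prop :=
  ∀ x y : V, G.Adj x y →
    ∀ k : V, (k = x ∨ G.Adj x k) → ∀ l : V, (l = y ∨ G.Adj y l) →
      d k l = d k x + d x y + d y l

/-- `f` is Lip(1) with respect to `d`. -/
def Lip1 (d : V → V → ℝ) (f : V → ℝ) : Prop := ∀ x y : V, f x - f y ≤ d x y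

end RicciWeighted

/-!
For `0 ≤ α < 1` the affine map `B ↦ δ_{(u,v)} - (1 - α) B` is a bijection from the `∗`-couplings
`B` between `μ_u` and `μ_v` with `(1 - α) |B| ≤ 1` onto the couplings between `μ_u^α` and `μ_v^α`,
and it sends the cost of `B` to `d(u,v) - (1 - α) cost(B)`. Hence
`W(μ_u^α, μ_v^α) = d(u,v) - (1 - α) sup {cost B | (1 - α) |B| ≤ 1}`, so `κ_α(u,v) / (1 - α)` is
`d(u,v)⁻¹` times a supremum over a family of `∗`-couplings which exhausts all of them as `α → 1`.
-/

open Function Topology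

namespace RicciWeighted

variable {V : Type*}

section Transport

variable {ν ν₁ ν₂ : V → ℝ} {u v : V} {B : V → V → ℝ}

lemma hasFiniteSupport_row (hB : (support fun p : V × V => B p.1 p.2).Finite) (x : V) :
    HasFiniteSupport (B x) :=
  (hB.image Prod.snd).subset fun y hy => ⟨(x, y), hy, rfl⟩

lemma hasFiniteSupport_col (hB : (support fun p : V × V => B p.1 p.2).Finite) (y : V) :
    HasFiniteSupport fun x => B x y :=
  (hB.image Prod.fst).subset fun x hx => ⟨(x, y), hx, rfl⟩

lemma finsum_finsum_eq_finsum_prod (hB : (support fun p : V × V => B p.1 p.2).Finite) :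
    ∑ᶠ x, ∑ᶠ y, B x y = ∑ᶠ p : V × V, B p.1 p.2 :=
  (finsum_curry _ hB).symm

lemma finsum_finsum_swap_eq_finsum_prod (hB : (support fun p : V × V => B p.1 p.2).Finite) :
    ∑ᶠ y, ∑ᶠ x, B x y = ∑ᶠ p : V × V, B p.1 p.2 := by
  rw [← finsum_curry (fun p : V × V => B p.2 p.1), ← finsum_comp_equiv (Equiv.prodComm V V)]
  · rfl
  · exact (hB.image Prod.swap).subset fun p hp => ⟨p.swap, hp, rfl⟩

lemma hasFiniteSupport_ite_eq (u : V) (a : ℝ) : HasFiniteSupport fun x => if x = u then a else 0 :=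
  (Set.finite_singleton u).subset fun _ hx => of_not_not fun hxu => hx (if_neg hxu)

lemma finsum_ite_eq_sub (hν : ∑ᶠ x, ν x = 1) (u : V) (a : ℝ) :
    ∑ᶠ x, ((if x = u then a else 0) - ν x) = a - 1 := by
  rw [finsum_sub_distrib (hasFiniteSupport_ite_eq u a)
      (hasFiniteSupport_of_finsum_ne_zero (by simp [hν])), hν,
    finsum_eq_single _ u fun x hx => if_neg hx, if_pos rfl]

lemma le_one_of_finsum_eq_one (hν₀ : ∀ x, 0 ≤ ν x) (hν : ∑ᶠ x, ν x = 1) (x : V) : ν x ≤ 1 :=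
  hν ▸ single_le_finsum x (hasFiniteSupport_of_finsum_ne_zero (by simp [hν])) hν₀

lemma isCoupling_mul (h₁ : ∀ x, 0 ≤ ν₁ x) (h₂ : ∀ y, 0 ≤ ν₂ y) (hs₁ : ∑ᶠ x, ν₁ x = 1)
    (hs₂ : ∑ᶠ y, ν₂ y = 1) : IsCoupling ν₁ ν₂ fun x y => ν₁ x * ν₂ y where
  mem_Icc x y := ⟨mul_nonneg (h₁ x) (h₂ y),
    mul_le_one₀ (le_one_of_finsum_eq_one h₁ hs₁ x) (h₂ y) (le_one_of_finsum_eq_one h₂ hs₂ y)⟩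
  finite_support :=
    ((hasFiniteSupport_of_finsum_ne_zero (by simp [hs₁])).prod
      (hasFiniteSupport_of_finsum_ne_zero (by simp [hs₂]))).subset
      fun _ hp => ⟨left_ne_zero_of_mul hp, right_ne_zero_of_mul hp⟩
  marginal_fst x := by rw [← mul_finsum, hs₂, mul_one]
  marginal_snd y := by rw [← finsum_mul, hs₁, one_mul]

lemma cost_nonneg {d A : V → V → ℝ} (hd : ∀ x y, 0 ≤ d x y) (hA : IsCoupling ν₁ ν₂ A) :
    0 ≤ cost d A :=
  finsum_nonneg fun p => mul_nonneg (hA.mem_Icc p.1 p.2).1 (hd p.1 p.2)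

lemma W_le_cost {d A : V → V → ℝ} (hd : ∀ x y, 0 ≤ d x y) (hA : IsCoupling ν₁ ν₂ A) :
    W d ν₁ ν₂ ≤ cost d A :=
  csInf_le ⟨0, by rintro _ ⟨A', hA', rfl⟩; exact cost_nonneg hd hA'⟩ ⟨A, hA, rfl⟩

noncomputable def lazy (α : ℝ) (u : V) (ν : V → ℝ) : V → ℝ :=
  fun x => (if x = u then α else 0) + (1 - α) * ν x

lemma lazy_nonneg {α : ℝ} (h0 : 0 ≤ α) (h1 : α ≤ 1) (hν : ∀ x, 0 ≤ ν x) (x : V) :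
    0 ≤ lazy α u ν x :=
  add_nonneg (by split_ifs <;> simp [h0]) (mul_nonneg (sub_nonneg.2 h1) (hν x))

lemma finsum_lazy (α : ℝ) (hν : ∑ᶠ x, ν x = 1) : ∑ᶠ x, lazy α u ν x = 1 := by
  have hfin : HasFiniteSupport ν := hasFiniteSupport_of_finsum_ne_zero (by simp [hν])
  unfold lazy
  rw [finsum_add_distrib (hasFiniteSupport_ite_eq u α)
      (hfin.subset (support_mul_subset_right _ _)), ← mul_finsum, hν,
    finsum_eq_single _ u fun x hx => if_neg hx, if_pos rfl]
  ring

end Transport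

section StarCoupling

variable {ν₁ ν₂ : V → ℝ} {u v : V} {B : V → V → ℝ}

namespace IsStarCoupling

lemma finsum_row (hB : IsStarCoupling ν₁ ν₂ u v B) (h₁ : ∑ᶠ x, ν₁ x = 1) (hu : ν₁ u = 0)
    (x : V) : ∑ᶠ y, B x y = (if x = u then 1 else 0) - ν₁ x := by
  have hrow : ∀ x, ∑ᶠ y, B x y = (if x = u then ∑ᶠ y, B u y else 0) - ν₁ x := by
    intro x
    split_ifs with hx
    · rw [hx, hu, sub_zero]
    · rw [hB.marginal_fst x hx, zero_sub]
  have htotal := (finsum_finsum_eq_finsum_prod hB.finite_support).trans hB.sum_zero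
  rw [finsum_congr hrow, finsum_ite_eq_sub h₁, sub_eq_zero] at htotal
  rw [hrow x, htotal]

lemma finsum_col (hB : IsStarCoupling ν₁ ν₂ u v B) (h₂ : ∑ᶠ y, ν₂ y = 1) (hv : ν₂ v = 0)
    (y : V) : ∑ᶠ x, B x y = (if y = v then 1 else 0) - ν₂ y := by
  have hcol : ∀ y, ∑ᶠ x, B x y = (if y = v then ∑ᶠ x, B x v else 0) - ν₂ y := by
    intro y
    split_ifs with hy
    · rw [hy, hv, sub_zero]
    · rw [hB.marginal_snd y hy, zero_sub]
  have htotal := (finsum_finsum_swap_eq_finsum_prod hB.finite_support).trans hB.sum_zero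
  rw [finsum_congr hcol, finsum_ite_eq_sub h₂, sub_eq_zero] at htotal
  rw [hcol y, htotal]

end IsStarCoupling

noncomputable def planOfStar (c : ℝ) (u v : V) (B : V → V → ℝ) : V → V → ℝ :=
  fun x y => (if x = u ∧ y = v then 1 else 0) - c * B x y

variable {c : ℝ}

lemma planOfStar_self : planOfStar c u v B u v = 1 - c * B u v := by
  simp [planOfStar]

lemma planOfStar_of_ne {x y : V} (h : (x, y) ≠ (u, v)) :
    planOfStar c u v B x y = -(c * B x y) := by
  have hne : ¬(x = u ∧ y = v) := fun h' => h (Prod.ext h'.1 h'.2)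
  simp only [planOfStar, if_neg hne, zero_sub]

lemma planOfStar_surjective (hc : c ≠ 0) (u v : V) : Surjective (planOfStar c u v) :=
  fun A => ⟨fun x y => ((if x = u ∧ y = v then 1 else 0) - A x y) / c, by
    funext x y
    simp only [planOfStar]
    field_simp
    ring⟩

lemma finite_support_planOfStar_iff (hc : c ≠ 0) :
    (support fun p : V × V => planOfStar c u v B p.1 p.2).Finite ↔
      (support fun p : V × V => B p.1 p.2).Finite := by
  have key : ∀ p : V × V, p ≠ (u, v) → (planOfStar c u v B p.1 p.2 ≠ 0 ↔ B p.1 p.2 ≠ 0) :=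
    fun p hp => by simp [planOfStar_of_ne hp, hc]
  constructor <;> intro h <;> refine (h.insert (u, v)).subset fun p hp =>
    Set.mem_insert_iff.2 (or_iff_not_imp_left.2 fun hne => ?_)
  exacts [(key p hne).2 hp, (key p hne).1 hp]

lemma finsum_planOfStar_row (hB : (support fun p : V × V => B p.1 p.2).Finite) (x : V) :
    ∑ᶠ y, planOfStar c u v B x y = (if x = u then 1 else 0) - c * ∑ᶠ y, B x y := by
  have hδ : HasFiniteSupport fun y => if x = u ∧ y = v then (1 : ℝ) else 0 :=
    (Set.finite_singleton v).subset fun _ hy => of_not_not fun hyv => hy (if_neg (hyv ·.2))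
  simp only [planOfStar]
  rw [finsum_sub_distrib hδ ((hasFiniteSupport_row hB x).subset (support_mul_subset_right _ _)),
    ← mul_finsum, finsum_eq_single _ v fun y hy => if_neg (hy ·.2)]
  simp only [and_true]

lemma finsum_planOfStar_col (hB : (support fun p : V × V => B p.1 p.2).Finite) (y : V) :
    ∑ᶠ x, planOfStar c u v B x y = (if y = v then 1 else 0) - c * ∑ᶠ x, B x y := by
  have hδ : HasFiniteSupport fun x => if x = u ∧ y = v then (1 : ℝ) else 0 :=
    (Set.finite_singleton u).subset fun _ hx => of_not_not fun hxu => hx (if_neg (hxu ·.1))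
  simp only [planOfStar]
  rw [finsum_sub_distrib hδ ((hasFiniteSupport_col hB y).subset (support_mul_subset_right _ _)),
    ← mul_finsum, finsum_eq_single _ u fun x hx => if_neg (hx ·.1)]
  simp only [true_and]

lemma cost_planOfStar (d : V → V → ℝ) (hB : (support fun p : V × V => B p.1 p.2).Finite) :
    cost d (planOfStar c u v B) = d u v - c * cost d B := by
  have hδ : HasFiniteSupport fun p : V × V => (if p.1 = u ∧ p.2 = v then 1 else 0) * d p.1 p.2 :=
    (Set.finite_singleton (u, v)).subset fun p hp =>
      of_not_not fun hne =>
        hp (by simp only [if_neg fun h : p.1 = u ∧ p.2 = v => hne (Prod.ext h.1 h.2), zero_mul])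
  have hBd : HasFiniteSupport fun p : V × V => c * (B p.1 p.2 * d p.1 p.2) :=
    hB.subset ((support_mul_subset_right _ _).trans (support_mul_subset_left _ _))
  simp only [cost, planOfStar, sub_mul, mul_assoc]
  rw [finsum_sub_distrib hδ hBd, ← mul_finsum,
    finsum_eq_single _ (u, v) fun p hp => by rw [if_neg fun h => hp (Prod.ext h.1 h.2), zero_mul]]
  simp only [and_self, if_true, one_mul]

/-- The marginal equations of `planOfStar (1 - α) u v B` and of `B` correspond to each other. -/
lemma sub_mul_eq_lazy_iff {α r : ℝ} (hα : α ≠ 1) (ν : V → ℝ) (u x : V) :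
    (if x = u then 1 else 0) - (1 - α) * r = lazy α u ν x ↔
      r = (if x = u then 1 else 0) - ν x := by
  have hc : 1 - α ≠ 0 := sub_ne_zero.2 hα.symm
  have h : (if x = u then 1 else 0) - (1 - α) * r - lazy α u ν x =
      (1 - α) * ((if x = u then 1 else 0) - ν x - r) := by
    unfold lazy
    split_ifs <;> ring
  rw [← sub_eq_zero, h, mul_eq_zero, or_iff_right hc, sub_eq_zero, eq_comm]

variable {α : ℝ}

theorem IsStarCoupling.isCoupling_planOfStar (hB : IsStarCoupling ν₁ ν₂ u v B)
    (h₁ : ∑ᶠ x, ν₁ x = 1) (h₂ : ∑ᶠ y, ν₂ y = 1) (hu : ν₁ u = 0) (hv : ν₂ v = 0) (hα : α < 1)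
    (hsmall : ∀ x y, (1 - α) * |B x y| ≤ 1) :
    IsCoupling (lazy α u ν₁) (lazy α v ν₂) (planOfStar (1 - α) u v B) where
  mem_Icc x y := by
    have hc : 0 ≤ 1 - α := by linarith
    have hxy := hsmall x y
    by_cases h : (x, y) = (u, v)
    · obtain ⟨rfl, rfl⟩ := Prod.mk_inj.1 h
      rw [abs_of_pos hB.pos] at hxy
      rw [planOfStar_self]
      constructor <;> nlinarith [hB.pos]
    · rw [abs_of_nonpos (hB.nonpos x y h)] at hxy
      rw [planOfStar_of_ne h]
      constructor <;> nlinarith [hB.nonpos x y h]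
  finite_support := (finite_support_planOfStar_iff (by linarith)).2 hB.finite_support
  marginal_fst x := by
    rw [finsum_planOfStar_row hB.finite_support, sub_mul_eq_lazy_iff hα.ne]
    exact hB.finsum_row h₁ hu x
  marginal_snd y := by
    rw [finsum_planOfStar_col hB.finite_support, sub_mul_eq_lazy_iff hα.ne]
    exact hB.finsum_col h₂ hv y

theorem IsCoupling.isStarCoupling_of_planOfStar
    (hA : IsCoupling (lazy α u ν₁) (lazy α v ν₂) (planOfStar (1 - α) u v B))
    (h₁ : ∑ᶠ x, ν₁ x = 1) (hu : ν₁ u = 0) (hα : α < 1) :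
    IsStarCoupling ν₁ ν₂ u v B := by
  have hc : 0 < 1 - α := by linarith
  have hB := (finite_support_planOfStar_iff hc.ne').1 hA.finite_support
  have hrow : ∀ x, ∑ᶠ y, B x y = (if x = u then 1 else 0) - ν₁ x := fun x =>
    (sub_mul_eq_lazy_iff hα.ne ν₁ u x).1 (finsum_planOfStar_row hB x ▸ hA.marginal_fst x)
  have hcol : ∀ y, ∑ᶠ x, B x y = (if y = v then 1 else 0) - ν₂ y := fun y =>
    (sub_mul_eq_lazy_iff hα.ne ν₂ v y).1 (finsum_planOfStar_col hB y ▸ hA.marginal_snd y)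
  refine ⟨?_, fun x y hxy => ?_, hB, ?_, fun x hx => ?_, fun y hy => ?_⟩
  · have hle : planOfStar (1 - α) u v B u v ≤ lazy α u ν₁ u :=
      hA.marginal_fst u ▸ single_le_finsum v (hasFiniteSupport_row hA.finite_support u)
        fun y => (hA.mem_Icc u y).1
    simp only [planOfStar_self, lazy, ↓reduceIte, hu, mul_zero, add_zero] at hle
    nlinarith
  · have h0 := (hA.mem_Icc x y).1
    rw [planOfStar_of_ne hxy] at h0
    nlinarith
  · rw [← finsum_finsum_eq_finsum_prod hB, finsum_congr hrow, finsum_ite_eq_sub h₁, sub_self]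
  · rw [hrow x, if_neg hx, zero_sub]
  · rw [hcol y, if_neg hy, zero_sub]

variable {d : V → V → ℝ}

theorem IsStarCoupling.W_lazy_le (hB : IsStarCoupling ν₁ ν₂ u v B) (h₁ : ∑ᶠ x, ν₁ x = 1)
    (h₂ : ∑ᶠ y, ν₂ y = 1) (hu : ν₁ u = 0) (hv : ν₂ v = 0) (hd : ∀ x y, 0 ≤ d x y) (hα : α < 1)
    (hsmall : ∀ x y, (1 - α) * |B x y| ≤ 1) :
    W d (lazy α u ν₁) (lazy α v ν₂) ≤ d u v - (1 - α) * cost d B :=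
  cost_planOfStar d hB.finite_support ▸
    W_le_cost hd (hB.isCoupling_planOfStar h₁ h₂ hu hv hα hsmall)

theorem le_W_lazy {b : ℝ} (hb : ∀ B, IsStarCoupling ν₁ ν₂ u v B → cost d B ≤ b)
    (hν₁ : ∀ x, 0 ≤ ν₁ x) (hν₂ : ∀ y, 0 ≤ ν₂ y) (h₁ : ∑ᶠ x, ν₁ x = 1) (h₂ : ∑ᶠ y, ν₂ y = 1)
    (hu : ν₁ u = 0) (h0 : 0 ≤ α) (hα : α < 1) :
    d u v - (1 - α) * b ≤ W d (lazy α u ν₁) (lazy α v ν₂) := by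
  refine le_csInf ⟨_, _, isCoupling_mul (lazy_nonneg h0 hα.le hν₁) (lazy_nonneg h0 hα.le hν₂)
    (finsum_lazy α h₁) (finsum_lazy α h₂), rfl⟩ ?_
  rintro _ ⟨A, hA, rfl⟩
  obtain ⟨B, rfl⟩ := planOfStar_surjective (sub_ne_zero.2 hα.ne') u v A
  have hB := hA.isStarCoupling_of_planOfStar h₁ hu hα
  rw [cost_planOfStar d hB.finite_support]
  nlinarith [hb B hB]

lemma eventually_one_sub_mul_abs_le_one (hB : (support fun p : V × V => B p.1 p.2).Finite) :
    ∀ᶠ α in 𝓝[<] (1 : ℝ), ∀ x y, (1 - α) * |B x y| ≤ 1 := by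
  set M := ∑ᶠ p : V × V, |B p.1 p.2|
  have hM : ∀ x y, |B x y| ≤ M := fun x y =>
    single_le_finsum (x, y) (hB.subset fun _ hp => abs_ne_zero.1 hp) fun _ => abs_nonneg _
  have hlim : Tendsto (fun α : ℝ => (1 - α) * M) (𝓝[<] 1) (𝓝 0) :=
    tendsto_nhdsWithin_of_tendsto_nhds
      (((continuous_const.sub continuous_id).mul continuous_const).tendsto' 1 0 (by simp))
  filter_upwards [hlim.eventually_le_const one_pos, self_mem_nhdsWithin] with α hαM hα x y
  exact (mul_le_mul_of_nonneg_left (hM x y) (sub_nonneg.2 (le_of_lt hα))).trans hαM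

end StarCoupling

section Walk

variable {G : SimpleGraph V} {d : V → V → ℝ}

lemma walkLength_cons {x y z : V} (h : G.Adj x y) (p : G.Walk y z) :
    walkLength G d (.cons h p) = d x y + walkLength G d p := by
  simp [walkLength]

lemma walkLength_nonneg (hd : ∀ x y, G.Adj x y → 0 < d x y) {x y : V} (p : G.Walk x y) :
    0 ≤ walkLength G d p := by
  induction p with
  | nil => simp [walkLength]
  | cons h p ih => rw [walkLength_cons]; exact add_nonneg (hd _ _ h).le ih

lemma dist_nonneg (hd : ∀ x y, G.Adj x y → 0 < d x y) (hshort : IsShortestDist G d) (x y : V) :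
    0 ≤ d x y :=
  (hshort x y).2 fun _ ⟨p, hp⟩ => hp ▸ walkLength_nonneg hd p

lemma dist_pos (hd : ∀ x y, G.Adj x y → 0 < d x y) (hshort : IsShortestDist G d) {u v : V}
    [Fintype (G.neighborSet u)] (huv : u ≠ v) (hu : (G.neighborFinset u).Nonempty) :
    0 < d u v := by
  have hε : 0 < (G.neighborFinset u).inf' hu (d u) :=
    (Finset.lt_inf'_iff _).2 fun z hz => hd u z ((G.mem_neighborFinset u z).1 hz)
  refine hε.trans_le ((hshort u v).2 ?_)
  rintro _ ⟨p, rfl⟩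
  cases p with
  | nil => exact absurd rfl huv
  | cons h p =>
    rw [walkLength_cons]
    exact le_add_of_le_of_nonneg (Finset.inf'_le _ ((G.mem_neighborFinset _ _).2 h))
      (walkLength_nonneg hd p)

end Walk

section Graph

variable {G : SimpleGraph V} [∀ v : V, Fintype (G.neighborSet v)] {d w : V → V → ℝ}

lemma _root_.SimpleGraph.Connected.neighborFinset_nonempty (hconn : G.Connected) {x y : V}
    (hxy : x ≠ y) : (G.neighborFinset x).Nonempty :=
  let ⟨z, hz⟩ := (hconn.preconnected x y).nonempty_neighborSet_left hxy
  ⟨z, (G.mem_neighborFinset x z).2 hz⟩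

variable (G w) in
lemma mu_eq_lazy (α : ℝ) (u : V) : mu G w α u = lazy α u (mu G w 0 u) := by
  funext z
  simp only [mu, lazy]
  split_ifs <;> ring

variable (G w) in
lemma mu_zero_self (u : V) : mu G w 0 u u = 0 :=
  if_pos rfl

lemma mu_zero_nonneg (hw : ∀ x y, G.Adj x y → 0 < w x y) (u z : V) : 0 ≤ mu G w 0 u z := by
  unfold mu
  split_ifs with h₁ h₂
  · exact le_rfl
  · exact div_nonneg (by simpa using (hw u z h₂).le)
      (Finset.sum_nonneg fun y hy => (hw u y ((G.mem_neighborFinset u y).1 hy)).le)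
  · exact le_rfl

lemma finsum_mu_zero (hw : ∀ x y, G.Adj x y → 0 < w x y) {u : V}
    (hu : (G.neighborFinset u).Nonempty) : ∑ᶠ z, mu G w 0 u z = 1 := by
  have hdeg : 0 < deg G w u :=
    Finset.sum_pos (fun y hy => hw u y ((G.mem_neighborFinset u y).1 hy)) hu
  have hsupp : support (mu G w 0 u) ⊆ G.neighborFinset u := fun z hz => by
    simp only [mem_support, mu] at hz
    split_ifs at hz with h₁ h₂
    exacts [absurd rfl hz, (G.mem_neighborFinset u z).2 h₂, absurd rfl hz]
  have hval : ∀ z ∈ G.neighborFinset u, mu G w 0 u z = w u z / deg G w u := fun z hz => by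
    have hadj := (G.mem_neighborFinset u z).1 hz
    simp [mu, hadj, hadj.ne']
  rw [finsum_eq_sum_of_support_subset _ hsupp, Finset.sum_congr rfl hval, ← Finset.sum_div]
  exact div_self hdeg.ne'

variable {u v : V} {α : ℝ}

lemma cost_div_le_kappaAlpha_div (hw : ∀ x y, G.Adj x y → 0 < w x y)
    (hu : (G.neighborFinset u).Nonempty) (hv : (G.neighborFinset v).Nonempty)
    (hd : ∀ x y, 0 ≤ d x y) (hduv : 0 < d u v) {B : V → V → ℝ}
    (hB : IsStarCoupling (mu G w 0 u) (mu G w 0 v) u v B) (hα : α < 1)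
    (hsmall : ∀ x y, (1 - α) * |B x y| ≤ 1) :
    cost d B / d u v ≤ kappaAlpha G d w α u v / (1 - α) := by
  have hW := hB.W_lazy_le (finsum_mu_zero hw hu) (finsum_mu_zero hw hv) (mu_zero_self G w u)
    (mu_zero_self G w v) hd hα hsmall
  rw [← mu_eq_lazy, ← mu_eq_lazy] at hW
  rw [kappaAlpha, le_div_iff₀ (sub_pos.2 hα), div_mul_eq_mul_div, one_sub_div hduv.ne',
    div_le_div_iff_of_pos_right hduv]
  linarith

lemma kappaAlpha_div_le (hw : ∀ x y, G.Adj x y → 0 < w x y)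
    (hu : (G.neighborFinset u).Nonempty) (hv : (G.neighborFinset v).Nonempty)
    (hduv : 0 < d u v) {b : ℝ}
    (hb : ∀ B, IsStarCoupling (mu G w 0 u) (mu G w 0 v) u v B → cost d B ≤ b)
    (h0 : 0 ≤ α) (hα : α < 1) :
    kappaAlpha G d w α u v / (1 - α) ≤ b / d u v := by
  have hW := le_W_lazy hb (mu_zero_nonneg hw u) (mu_zero_nonneg hw v) (finsum_mu_zero hw hu)
    (finsum_mu_zero hw hv) (mu_zero_self G w u) h0 hα
  rw [← mu_eq_lazy, ← mu_eq_lazy] at hW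
  rw [kappaAlpha, div_le_iff₀ (sub_pos.2 hα), div_mul_eq_mul_div, one_sub_div hduv.ne',
    div_le_div_iff_of_pos_right hduv]
  linarith

end Graph

end RicciWeighted

open RicciWeighted in
/-- **Curvature via `∗`-coupling functions.** For a locally finite weighted
graph `G = (V,E,d,w)` and distinct vertices `u, v`, the Lin–Lu–Yau Ricci curvature admits
the limit-free representation
`κ(u,v) = (1/d(u,v)) · sup_B ∑_{x,y} B(x,y) d(x,y)`,
the supremum taken over all `∗`-couplings `B` between `μ_u` and `μ_v`; equivalently
`d(u,v)·κ(u,v)` is the least upper bound of the costs of `∗`-couplings. -/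
theorem curvature_eq_sup_star_coupling
    {V : Type*} (G : SimpleGraph V) [∀ v : V, Fintype (G.neighborSet v)]
    (hconn : G.Connected)
    (d w : V → V → ℝ)
    (hd_symm : ∀ x y : V, d x y = d y x)
    (hd_pos : ∀ x y : V, G.Adj x y → 0 < d x y)
    (hshort : IsShortestDist G d)
    (hw_symm : ∀ x y : V, w x y = w y x)
    (hw_pos : ∀ x y : V, G.Adj x y → 0 < w x y)
    (u v : V) (huv : u ≠ v)
    (k : ℝ) (hk : IsRicci G d w u v k) :
    IsLUB {r : ℝ | ∃ B : V → V → ℝ,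
        IsStarCoupling (mu G w 0 u) (mu G w 0 v) u v B ∧ cost d B = r}
      (d u v * k) := by
  have hu := hconn.neighborFinset_nonempty huv
  have hv := hconn.neighborFinset_nonempty huv.symm
  have hd := dist_nonneg hd_pos hshort
  have hduv := dist_pos hd_pos hshort huv hu
  refine ⟨?_, fun b hb => ?_⟩
  · rintro _ ⟨B, hB, rfl⟩
    have hev : ∀ᶠ α in 𝓝[<] 1,
        cost d B / d u v ≤ kappaAlpha G d w α u v / (1 - α) := by
      filter_upwards [eventually_one_sub_mul_abs_le_one hB.finite_support, self_mem_nhdsWithin]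
        with α hsmall hα
      exact cost_div_le_kappaAlpha_div hw_pos hu hv hd hduv hB hα hsmall
    exact (div_le_iff₀' hduv).1 (ge_of_tendsto hk hev)
  · have hev : ∀ᶠ α in 𝓝[<] 1, kappaAlpha G d w α u v / (1 - α) ≤ b / d u v := by
      filter_upwards [Ioo_mem_nhdsLT one_pos] with α hα
      exact kappaAlpha_div_le hw_pos hu hv hduv (fun B hB => hb ⟨B, hB, rfl⟩) hα.1.le hα.2
    exact (le_div_iff₀' hduv).1 (le_of_tendsto hk hev)
end

section
/- Let G = (V, E) be a finite connected simple graph with girth at least 6, equipped with uniform edge weights (d ≡ 1 and w ≡ 1). Then the Gauss–Bonnet theorem holds for G: K(G) = χ(G), where χ(G) = 2 − 2g(G) is the Euler characteristic of G and g(G) = |E| − |V| + 1 is the graph genus; equivalently K(G) = 2|V| − 2|E|. -/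
/-!
Girth at least six makes the neighbourhood of an edge `xy` a tree: a neighbour of `x` other than
`y` and a neighbour of `y` other than `x` are at distance three. For `α ≥ 1/2` the plan sending
`2α - 1` from `x` to `y`, the remaining `1 - α` at `x` to the neighbours of `y`, and the
neighbours of `x` to `y` costs `1 - (1 - α)(2/deg x + 2/deg y - 2)`; the potential taking the
values `1, 0, 2, -1` on `x`, `y`, `N(x) \ {y}`, `N(y) \ {x}` shows by weak duality that no
coupling is cheaper. Hence `κ(x,y) = 2/deg x + 2/deg y - 2`, and summing over the edges,
`∑ (2/deg x + 2/deg y) = ∑_v deg v · 2/deg v = 2|V|`.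
-/

open Filter Finset
open scoped Classical

namespace SimpleGraph

variable {V : Type*} {G : SimpleGraph V}

section Girth

variable {a b c d e : V}

theorem not_adj_of_adj_of_adj (hg : 4 ≤ G.egirth) (hab : G.Adj a b) (hbc : G.Adj b c) :
    ¬G.Adj c a := by
  intro hca
  have := le_egirth.mp hg a (.cons hab (.cons hbc (.cons hca .nil)))
    (by simp [Walk.isCycle_def, hab.ne, hbc.ne, hca.ne, hab.ne', hca.ne'])
  norm_num at this

theorem not_adj_of_adj_of_adj_of_adj (hg : 5 ≤ G.egirth) (hab : G.Adj a b) (hbc : G.Adj b c)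
    (hcd : G.Adj c d) (hac : a ≠ c) (hbd : b ≠ d) : ¬G.Adj d a := by
  intro hda
  have := le_egirth.mp hg a (.cons hab (.cons hbc (.cons hcd (.cons hda .nil))))
    (by simp [Walk.isCycle_def, hab.ne, hbc.ne, hcd.ne, hda.ne, hab.ne', hda.ne', hac, hbd,
      hac.symm])
  norm_num at this

theorem not_adj_of_adj_of_adj_of_adj_of_adj (hg : 6 ≤ G.egirth) (hab : G.Adj a b)
    (hbc : G.Adj b c) (hcd : G.Adj c d) (hde : G.Adj d e) (hac : a ≠ c) (had : a ≠ d)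
    (hbd : b ≠ d) (hbe : b ≠ e) (hce : c ≠ e) : ¬G.Adj e a := by
  intro hea
  have := le_egirth.mp hg a (.cons hab (.cons hbc (.cons hcd (.cons hde (.cons hea .nil)))))
    (by simp [Walk.isCycle_def, hab.ne, hbc.ne, hcd.ne, hde.ne, hea.ne, hab.ne', hea.ne', hac,
      had, hbd, hbe, hce, hac.symm, had.symm])
  norm_num at this

protected theorem Reachable.two_lt_dist_of_ne_of_not_adj_of_commonNeighbors_eq_empty
    (h : G.Reachable a b) (hne : a ≠ b) (hnadj : ¬G.Adj a b)
    (hcommon : G.commonNeighbors a b = ∅) : 2 < G.dist a b := by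
  have := two_lt_edist_iff.mpr ⟨hne, hnadj, hcommon⟩
  rw [← h.coe_dist_eq_edist] at this
  exact_mod_cast this

theorem dist_eq_two_of_adj_of_adj (hg : 4 ≤ G.egirth) (hab : G.Adj a b) (hbc : G.Adj b c)
    (hac : a ≠ c) : G.dist a c = 2 :=
  le_antisymm (by simpa using dist_le (.cons hab (.cons hbc .nil)))
    ((hab.reachable.trans hbc.reachable).one_lt_dist_of_ne_of_not_adj hac
      fun h => not_adj_of_adj_of_adj hg hab hbc h.symm)

theorem three_le_dist_of_adj_of_adj_of_adj (hg : 6 ≤ G.egirth) (hab : G.Adj a b)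
    (hbc : G.Adj b c) (hcd : G.Adj c d) (hac : a ≠ c) (hbd : b ≠ d) : 3 ≤ G.dist a d := by
  have hg4 : 4 ≤ G.egirth := le_trans (by norm_num) hg
  have hg5 : 5 ≤ G.egirth := le_trans (by norm_num) hg
  have had : a ≠ d := by
    rintro rfl
    exact not_adj_of_adj_of_adj hg4 hab hbc hcd
  refine (hab.reachable.trans (hbc.reachable.trans hcd.reachable)
    ).two_lt_dist_of_ne_of_not_adj_of_commonNeighbors_eq_empty had
    (fun h => not_adj_of_adj_of_adj_of_adj hg5 hab hbc hcd hac hbd h.symm)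
    (Set.eq_empty_iff_forall_notMem.mpr fun z hz => ?_)
  obtain ⟨haz, hdz⟩ := G.mem_commonNeighbors.mp hz
  by_cases hzb : z = b
  · exact not_adj_of_adj_of_adj hg4 hbc hcd (hzb ▸ hdz)
  by_cases hzc : z = c
  · exact not_adj_of_adj_of_adj hg4 hab hbc (hzc ▸ haz).symm
  exact not_adj_of_adj_of_adj_of_adj_of_adj hg hab hbc hcd hdz hac had hbd
    (Ne.symm hzb) (Ne.symm hzc) haz.symm

theorem nontrivial_of_girth_ne_zero (h : G.girth ≠ 0) : Nontrivial V := by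
  by_contra hV
  rw [not_nontrivial_iff_subsingleton] at hV
  have : G = ⊥ := by ext a b; simp [Subsingleton.elim a b]
  exact h (this ▸ girth_bot)

end Girth

section Sums

variable [Fintype V] [DecidableEq V] [DecidableRel G.Adj]

theorem sum_neighborFinset_eq_add_mul {x y : V} (hxy : G.Adj x y) {g : V → ℝ} {c : ℝ}
    (hg : ∀ z, G.Adj x z → z ≠ y → g z = c) :
    ∑ z ∈ G.neighborFinset x, g z = g y + ((G.degree x : ℝ) - 1) * c := by
  have hy : y ∈ G.neighborFinset x := (mem_neighborFinset _ _ _).mpr hxy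
  rw [← add_sum_erase _ _ hy, sum_congr rfl fun z hz =>
      hg z ((mem_neighborFinset _ _ _).mp (mem_of_mem_erase hz)) (ne_of_mem_erase hz),
    sum_const, card_erase_of_mem hy, card_neighborFinset_eq_degree, nsmul_eq_mul,
    Nat.cast_sub hxy.degree_pos_left, Nat.cast_one]

theorem sum_edgeFinset_lift_add {M : Type*} [AddCommMonoid M] (g : V → M) :
    ∑ e ∈ G.edgeFinset, Sym2.lift ⟨fun a b => g a + g b, fun _ _ => add_comm _ _⟩ e =
      ∑ v, G.degree v • g v := by
  have hedge : ∀ e ∈ G.edgeFinset, Sym2.lift ⟨fun a b => g a + g b, fun _ _ => add_comm _ _⟩ e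
      = ∑ v, if v ∈ e then g v else 0 := by
    intro e he
    induction e using Sym2.ind with
    | _ a b =>
      have hab : a ≠ b := (mem_edgeFinset.mp he).ne
      rw [← sum_filter, show ({v | v ∈ s(a, b)} : Finset V) = {a, b} by ext; simp,
        sum_pair hab, Sym2.lift_mk]
  rw [sum_congr rfl hedge, sum_comm]
  refine sum_congr rfl fun v _ => ?_
  rw [← sum_filter, ← incidenceFinset_eq_filter, sum_const, card_incidenceFinset_eq_degree]

end Sums

end SimpleGraph

namespace RicciWeighted

open SimpleGraph

variable {V : Type*}

section Transport

variable {μ₁ μ₂ : V → ℝ} {d A : V → V → ℝ}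

theorem W_eq_of_cost_le {r : ℝ} (hA : IsCoupling μ₁ μ₂ A) (hAr : cost d A ≤ r)
    (h : ∀ B, IsCoupling μ₁ μ₂ B → r ≤ cost d B) : W d μ₁ μ₂ = r := by
  have hr : r ∈ lowerBounds {s | ∃ B, IsCoupling μ₁ μ₂ B ∧ cost d B = s} := by
    rintro _ ⟨B, hB, rfl⟩
    exact h B hB
  exact le_antisymm ((csInf_le ⟨r, hr⟩ ⟨A, hA, rfl⟩).trans hAr) (le_csInf ⟨_, A, hA, rfl⟩ hr)

variable [Fintype V]

theorem cost_eq_sum : cost d A = ∑ u, ∑ v, A u v * d u v := by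
  rw [cost, finsum_eq_sum_of_fintype, Fintype.sum_prod_type]

theorem IsCoupling.of_nonneg (h0 : ∀ u v, 0 ≤ A u v) (h₁ : ∀ u, ∑ v, A u v = μ₁ u)
    (h₂ : ∀ v, ∑ u, A u v = μ₂ v) (hle : ∀ u, μ₁ u ≤ 1) : IsCoupling μ₁ μ₂ A where
  mem_Icc u v := ⟨h0 u v,
    (single_le_sum (fun w _ => h0 u w) (mem_univ v)).trans ((h₁ u).trans_le (hle u))⟩
  finite_support := Set.toFinite _
  marginal_fst u := by rw [finsum_eq_sum_of_fintype, h₁]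
  marginal_snd v := by rw [finsum_eq_sum_of_fintype, h₂]

theorem IsCoupling.sum_mul_sub_sum_mul_le_cost (hA : IsCoupling μ₁ μ₂ A) {f : V → ℝ}
    (hf : ∀ u v, μ₁ u ≠ 0 → μ₂ v ≠ 0 → f u - f v ≤ d u v) :
    ∑ u, μ₁ u * f u - ∑ v, μ₂ v * f v ≤ cost d A := by
  have h₁ : ∀ u, ∑ v, A u v = μ₁ u := fun u => by
    rw [← finsum_eq_sum_of_fintype, hA.marginal_fst]
  have h₂ : ∀ v, ∑ u, A u v = μ₂ v := fun v => by
    rw [← finsum_eq_sum_of_fintype, hA.marginal_snd]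
  have h0 : ∀ u v, 0 ≤ A u v := fun u v => (hA.mem_Icc u v).1
  have hsupp : ∀ u v, A u v ≠ 0 → μ₁ u ≠ 0 ∧ μ₂ v ≠ 0 := fun u v huv => by
    have hpos := (h0 u v).lt_of_ne' huv
    rw [← h₁, ← h₂]
    exact ⟨(hpos.trans_le (single_le_sum (fun w _ => h0 u w) (mem_univ v))).ne',
      (hpos.trans_le (single_le_sum (fun w _ => h0 w v) (mem_univ u))).ne'⟩
  calc ∑ u, μ₁ u * f u - ∑ v, μ₂ v * f v = ∑ u, ∑ v, A u v * (f u - f v) := by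
        simp only [← h₁, ← h₂, sum_mul, mul_sub, sum_sub_distrib]
        rw [sum_comm (f := fun u v => A v u * f u)]
    _ ≤ ∑ u, ∑ v, A u v * d u v := sum_le_sum fun u _ => sum_le_sum fun v _ => by
        by_cases huv : A u v = 0
        · simp [huv]
        · obtain ⟨hu, hv⟩ := hsupp u v huv
          exact mul_le_mul_of_nonneg_left (hf u v hu hv) (h0 u v)
    _ = cost d A := cost_eq_sum.symm

end Transport

variable {G : SimpleGraph V} [DecidableRel G.Adj] {x y : V}

variable (G) in
noncomputable def edgePotential (x y z : V) : ℝ :=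
  if z = x then 1 else if z = y then 0 else if G.Adj x z then 2 else if G.Adj y z then -1 else 0

theorem edgePotential_left : edgePotential G x y x = 1 := by
  simp [edgePotential]

theorem edgePotential_right (hxy : x ≠ y) : edgePotential G x y y = 0 := by
  simp [edgePotential, hxy.symm]

theorem edgePotential_of_adj_left {u : V} (hxu : G.Adj x u) (huy : u ≠ y) :
    edgePotential G x y u = 2 := by
  simp [edgePotential, hxu.ne', huy, hxu]

theorem edgePotential_of_adj_right (hg : 4 ≤ G.egirth) (hxy : G.Adj x y) {v : V}
    (hyv : G.Adj y v) (hvx : v ≠ x) : edgePotential G x y v = -1 := by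
  have hxv : ¬G.Adj x v := fun h => not_adj_of_adj_of_adj hg hxy hyv h.symm
  simp [edgePotential, hvx, hyv.ne', hyv, hxv]

theorem edgePotential_sub_le_dist (hg : 6 ≤ G.egirth) (hxy : G.Adj x y) {u v : V}
    (hu : u = x ∨ G.Adj x u) (hv : v = y ∨ G.Adj y v) :
    edgePotential G x y u - edgePotential G x y v ≤ G.dist u v := by
  have hg4 : 4 ≤ G.egirth := le_trans (by norm_num) hg
  have hfx : edgePotential G x y x = 1 := edgePotential_left
  have hfy : edgePotential G x y y = 0 := edgePotential_right hxy.ne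
  have hdist₀ : ∀ a b, (0 : ℝ) ≤ G.dist a b := fun _ _ => Nat.cast_nonneg _
  obtain hu | hxu := hu
  · rw [hu, hfx]
    obtain hv | hyv := hv
    · rw [hv, hfy, dist_eq_one_iff_adj.mpr hxy]
      norm_num
    by_cases hvx : v = x
    · rw [hvx, hfx, sub_self]
      exact hdist₀ x x
    rw [edgePotential_of_adj_right hg4 hxy hyv hvx,
      dist_eq_two_of_adj_of_adj hg4 hxy hyv (Ne.symm hvx)]
    norm_num
  by_cases huy : u = y
  · rw [huy, hfy]
    obtain hv | hyv := hv
    · rw [hv, hfy, sub_self]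
      exact hdist₀ y y
    by_cases hvx : v = x
    · rw [hvx, hfx]
      linarith [hdist₀ y x]
    rw [edgePotential_of_adj_right hg4 hxy hyv hvx, dist_eq_one_iff_adj.mpr hyv]
    norm_num
  rw [edgePotential_of_adj_left hxu huy]
  obtain hv | hyv := hv
  · rw [hv, hfy, SimpleGraph.dist_comm,
      dist_eq_two_of_adj_of_adj hg4 hxy.symm hxu (Ne.symm huy)]
    norm_num
  by_cases hvx : v = x
  · rw [hvx, hfx, dist_eq_one_iff_adj.mpr hxu.symm]
    norm_num
  have h₃ : (3 : ℝ) ≤ G.dist u v := by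
    exact_mod_cast three_le_dist_of_adj_of_adj_of_adj hg hxu.symm hxy hyv huy (Ne.symm hvx)
  rw [edgePotential_of_adj_right hg4 hxy hyv hvx]
  linarith

variable [Fintype V] {α : ℝ} {z : V}

theorem eq_or_adj_of_mu_ne_zero {w : V → V → ℝ} (h : mu G w α x z ≠ 0) :
    z = x ∨ G.Adj x z := by
  by_contra! hz
  simp [mu, hz.1, hz.2] at h

variable (G) in
noncomputable def neighborMass (α : ℝ) (x z : V) : ℝ :=
  if G.Adj x z then (1 - α) / G.degree x else 0

theorem mu_one_eq :
    mu G (fun _ _ => 1) α x z = (if z = x then α else 0) + neighborMass G α x z := by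
  by_cases hz : z = x
  · subst hz; simp [mu, neighborMass]
  · simp [mu, neighborMass, deg, hz]

theorem sum_neighborMass_mul (g : V → ℝ) :
    ∑ z, neighborMass G α x z * g z = (1 - α) / G.degree x * ∑ z ∈ G.neighborFinset x, g z := by
  simp [neighborMass, ite_mul, ← sum_filter, mul_sum, neighborFinset_eq_filter]

theorem sum_mu_one_mul (g : V → ℝ) : ∑ z, mu G (fun _ _ => 1) α x z * g z =
    α * g x + (1 - α) / G.degree x * ∑ z ∈ G.neighborFinset x, g z := by
  simp [mu_one_eq, add_mul, sum_add_distrib, ite_mul, sum_neighborMass_mul]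

theorem sum_neighborMass (hx : G.degree x ≠ 0) : ∑ z, neighborMass G α x z = 1 - α := by
  simpa [card_neighborFinset_eq_degree, hx] using
    sum_neighborMass_mul (G := G) (α := α) (x := x) 1

variable (G) in
noncomputable def edgePlan (α : ℝ) (x y u v : V) : ℝ :=
  (if u = x ∧ v = y then 2 * α - 1 else 0) + (if u = x then neighborMass G α y v else 0) +
    (if v = y then neighborMass G α x u else 0)

theorem isCoupling_edgePlan (hxy : G.Adj x y) (hα : α ∈ Set.Icc (1 / 2 : ℝ) 1) :
    IsCoupling (mu G (fun _ _ => 1) α x) (mu G (fun _ _ => 1) α y) (edgePlan G α x y) := by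
  obtain ⟨hα₀, hα₁⟩ := hα
  have hmass : ∀ a b, 0 ≤ neighborMass G α a b := fun a b => by
    unfold neighborMass; split_ifs <;> positivity
  refine .of_nonneg (fun u v => ?_) (fun u => ?_) (fun v => ?_) (fun u => ?_)
  · unfold edgePlan
    have := hmass y v
    have := hmass x u
    split_ifs <;> linarith
  · simp [edgePlan, sum_add_distrib, ite_and, sum_neighborMass hxy.symm.degree_pos_left.ne',
      mu_one_eq]
    split_ifs <;> ring
  · simp [edgePlan, sum_add_distrib, ite_and, sum_neighborMass hxy.degree_pos_left.ne',
      mu_one_eq]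
    split_ifs <;> ring
  · rw [mu_one_eq]
    unfold neighborMass
    split_ifs with h₁ h₂ h₂
    · exact absurd (h₁ ▸ h₂) G.irrefl
    · linarith
    · have : (1 : ℝ) ≤ G.degree x := by exact_mod_cast h₂.degree_pos_left
      linarith [div_le_one_of_le₀ (show 1 - α ≤ G.degree x by linarith) (by linarith)]
    · norm_num

theorem cost_edgePlan (hg : 4 ≤ G.egirth) (hxy : G.Adj x y) :
    cost (fun a b => (G.dist a b : ℝ)) (edgePlan G α x y) =
      1 - (1 - α) * (2 / G.degree x + 2 / G.degree y - 2) := by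
  have hx : (G.degree x : ℝ) ≠ 0 := by exact_mod_cast hxy.degree_pos_left.ne'
  have hy : (G.degree y : ℝ) ≠ 0 := by exact_mod_cast hxy.degree_pos_right.ne'
  have hxv : ∑ v ∈ G.neighborFinset y, (G.dist x v : ℝ) = 0 + ((G.degree y : ℝ) - 1) * 2 := by
    rw [sum_neighborFinset_eq_add_mul hxy.symm fun v hyv hvx => by
      rw [dist_eq_two_of_adj_of_adj hg hxy hyv hvx.symm, Nat.cast_ofNat],
      dist_self, Nat.cast_zero]
  have huy : ∑ u ∈ G.neighborFinset x, (G.dist u y : ℝ) = 0 + ((G.degree x : ℝ) - 1) * 2 := by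
    rw [sum_neighborFinset_eq_add_mul hxy fun u hxu huy => by
      rw [dist_comm, dist_eq_two_of_adj_of_adj hg hxy.symm hxu huy.symm, Nat.cast_ofNat],
      dist_self, Nat.cast_zero]
  simp only [cost_eq_sum, edgePlan, add_mul, ite_mul, zero_mul, sum_add_distrib, ite_and,
    sum_ite_irrel, sum_const_zero, sum_ite_eq', mem_univ, if_true, sum_neighborMass_mul, hxv,
    huy, dist_eq_one_iff_adj.mpr hxy, Nat.cast_one]
  field_simp
  ring

theorem sum_mu_mul_edgePotential_sub (hg : 4 ≤ G.egirth) (hxy : G.Adj x y) :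
    ∑ u, mu G (fun _ _ => 1) α x u * edgePotential G x y u -
        ∑ v, mu G (fun _ _ => 1) α y v * edgePotential G x y v =
      1 - (1 - α) * (2 / G.degree x + 2 / G.degree y - 2) := by
  have hx : (G.degree x : ℝ) ≠ 0 := by exact_mod_cast hxy.degree_pos_left.ne'
  have hy : (G.degree y : ℝ) ≠ 0 := by exact_mod_cast hxy.degree_pos_right.ne'
  rw [sum_mu_one_mul, sum_mu_one_mul,
    sum_neighborFinset_eq_add_mul hxy fun u hxu huy => edgePotential_of_adj_left hxu huy,
    sum_neighborFinset_eq_add_mul hxy.symm fun v hyv hvx =>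
      edgePotential_of_adj_right hg hxy hyv hvx,
    edgePotential_left, edgePotential_right hxy.ne]
  field_simp
  ring

theorem W_mu_one_of_adj (hg : 6 ≤ G.egirth) (hxy : G.Adj x y)
    (hα : α ∈ Set.Icc (1 / 2 : ℝ) 1) :
    W (fun a b => (G.dist a b : ℝ)) (mu G (fun _ _ => 1) α x) (mu G (fun _ _ => 1) α y) =
      1 - (1 - α) * (2 / G.degree x + 2 / G.degree y - 2) := by
  have hg4 : 4 ≤ G.egirth := le_trans (by norm_num) hg
  refine W_eq_of_cost_le (isCoupling_edgePlan hxy hα) (cost_edgePlan hg4 hxy).le fun B hB => ?_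
  rw [← sum_mu_mul_edgePotential_sub hg4 hxy]
  exact hB.sum_mul_sub_sum_mul_le_cost fun u v hu hv =>
    edgePotential_sub_le_dist hg hxy (eq_or_adj_of_mu_ne_zero hu) (eq_or_adj_of_mu_ne_zero hv)

theorem isRicci_of_six_le_egirth (hg : 6 ≤ G.egirth) (hxy : G.Adj x y) :
    IsRicci G (fun a b => (G.dist a b : ℝ)) (fun _ _ => 1) x y
      (2 / G.degree x + 2 / G.degree y - 2) := by
  refine tendsto_const_nhds.congr' ?_
  filter_upwards [Ioo_mem_nhdsLT (show (1 / 2 : ℝ) < 1 by norm_num)] with α hα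
  rw [kappaAlpha, W_mu_one_of_adj hg hxy (Set.Ioo_subset_Icc_self hα),
    dist_eq_one_iff_adj.mpr hxy, Nat.cast_one, div_one, sub_sub_cancel,
    mul_div_cancel_left₀ _ (sub_pos.mpr hα.2).ne']

end RicciWeighted

open RicciWeighted in
/-- **Gauss–Bonnet.** For a finite connected simple graph `G` with girth
at least `6`, equipped with uniform edge lengths `d ≡ 1` (i.e. `d` is the usual graph
distance) and uniform weights `w ≡ 1`, the total Lin–Lu–Yau curvature equals the Euler
characteristic: `K(G) = χ(G) = 2 − 2g(G)` where `g(G) = |E| − |V| + 1`; equivalently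
`K(G) = 2|V| − 2|E|`. -/
theorem gauss_bonnet_of_girth_ge_six
    {V : Type*} [DecidableEq V] [Fintype V] (G : SimpleGraph V) [DecidableRel G.Adj]
    (hconn : G.Connected)
    (hgirth : 6 ≤ G.girth)
    (κ : V → V → ℝ) (hκ_symm : ∀ x y : V, κ x y = κ y x)
    (hκ : ∀ x y : V, G.Adj x y →
      IsRicci G (fun a b => (G.dist a b : ℝ)) (fun _ _ => 1) x y (κ x y)) :
    (∑ e ∈ G.edgeFinset, Sym2.lift ⟨κ, hκ_symm⟩ e) =
        2 - 2 * ((G.edgeFinset.card : ℝ) - Fintype.card V + 1) ∧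
      (∑ e ∈ G.edgeFinset, Sym2.lift ⟨κ, hκ_symm⟩ e) =
        2 * (Fintype.card V : ℝ) - 2 * G.edgeFinset.card := by
  have hg : (6 : ℕ∞) ≤ G.egirth :=
    (Nat.cast_le.mpr hgirth).trans (ENat.natCast_toNat_le_self _)
  have := SimpleGraph.nontrivial_of_girth_ne_zero (G := G) (by omega)
  have hdeg : ∀ v, (G.degree v : ℝ) ≠ 0 := fun v => by
    exact_mod_cast (hconn.preconnected.degree_pos_of_nontrivial v).ne'
  have hκ_edge : ∀ e ∈ G.edgeFinset, Sym2.lift ⟨κ, hκ_symm⟩ e =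
      Sym2.lift ⟨fun a b => 2 / (G.degree a : ℝ) + 2 / G.degree b, fun _ _ => add_comm _ _⟩ e
        - 2 := by
    intro e he
    induction e using Sym2.ind with
    | _ a b =>
      have hab : G.Adj a b := SimpleGraph.mem_edgeFinset.mp he
      simpa only [Sym2.lift_mk] using
        tendsto_nhds_unique (hκ a b hab) (isRicci_of_six_le_egirth hg hab)
  have hK : ∑ e ∈ G.edgeFinset, Sym2.lift ⟨κ, hκ_symm⟩ e =
      2 * (Fintype.card V : ℝ) - 2 * G.edgeFinset.card := by
    have hv : ∀ v, G.degree v • (2 / (G.degree v : ℝ)) = 2 := fun v => by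
      rw [nsmul_eq_mul, mul_div_cancel₀ _ (hdeg v)]
    rw [sum_congr rfl hκ_edge, sum_sub_distrib, SimpleGraph.sum_edgeFinset_lift_add]
    simp only [hv, sum_const, card_univ, nsmul_eq_mul]
    ring
  exact ⟨by rw [hK]; ring, hK⟩
end

section
/- Let G = (V, E, d, w) be a locally finite weighted graph, let u ∼ v, and let α ∈ [0,1). If A is a coupling between μ_u^α and μ_v^α, then the function B = (1/(1−α))(𝟙_{(u,v)} − A), where 𝟙_{(u,v)} is the indicator of the single pair (u,v), is a ∗-coupling between μ_u and μ_v, provided A(u,v) < 1. -/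
/-! `A` couples two probability distributions, so it has total mass one and `𝟙_{(u,v)} − A` has
total mass zero. Away from `u` (resp. `v`) the marginals of `A` are `μ_u^α = (1 − α) μ_u`
(resp. `(1 − α) μ_v`), which the factor `1/(1 − α)` turns into those of `μ_u` (resp. `μ_v`). -/

open Filter Finset
open scoped Classical

namespace RicciWeighted

variable {V : Type*}

variable {G : SimpleGraph V} [∀ v : V, Fintype (G.neighborSet v)] {w : V → V → ℝ}

lemma deg_pos (hw_pos : ∀ x y : V, G.Adj x y → 0 < w x y) {x y : V} (hxy : G.Adj x y) :
    0 < deg G w x :=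
  Finset.sum_pos (fun z hz => hw_pos x z ((G.mem_neighborFinset x z).1 hz))
    ⟨y, (G.mem_neighborFinset x y).2 hxy⟩

lemma mu_apply_eq_mul_mu_zero (α : ℝ) {x z : V} (hz : z ≠ x) :
    mu G w α x z = (1 - α) * mu G w 0 x z := by
  by_cases h : G.Adj x z <;> simp [mu, hz, h, mul_div_assoc]

lemma finsum_mu_eq_one (α : ℝ) {x : V} (hD : deg G w x ≠ 0) : ∑ᶠ z : V, mu G w α x z = 1 := by
  have hsupp : Function.support (mu G w α x) ⊆ ↑(insert x (G.neighborFinset x)) := by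
    intro z hz
    by_cases h : G.Adj x z
    · simp [h]
    · by_contra hz'
      simp_all [mu]
  have hnbr : ∀ z ∈ G.neighborFinset x, mu G w α x z = (1 - α) * w x z / deg G w x := by
    intro z hz
    have hadj : G.Adj x z := (G.mem_neighborFinset x z).1 hz
    simp [mu, hadj.ne', hadj]
  rw [finsum_eq_sum_of_support_subset _ hsupp, Finset.sum_insert (by simp),
    Finset.sum_congr rfl hnbr, ← Finset.sum_div, ← Finset.mul_sum, ← deg, mul_div_assoc,
    div_self hD, mul_one]
  simp [mu]

namespace IsCoupling

variable {μ₁ μ₂ : V → ℝ} {A : V → V → ℝ}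

lemma finsum_eq_finsum_fst (hA : IsCoupling μ₁ μ₂ A) :
    ∑ᶠ p : V × V, A p.1 p.2 = ∑ᶠ x : V, μ₁ x := by
  rw [finsum_curry _ hA.finite_support]
  exact finsum_congr hA.marginal_fst

lemma isStarCoupling (hA : IsCoupling μ₁ μ₂ A) {ν₁ ν₂ : V → ℝ} {u v : V} {t : ℝ} (ht : 0 < t)
    (hmass : ∑ᶠ x : V, μ₁ x = 1) (hAuv : A u v < 1)
    (h₁ : ∀ x : V, x ≠ u → t * μ₁ x = ν₁ x) (h₂ : ∀ y : V, y ≠ v → t * μ₂ y = ν₂ y) :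
    IsStarCoupling ν₁ ν₂ u v
      (fun x y => t * ((if x = u ∧ y = v then (1 : ℝ) else 0) - A x y)) := by
  have hδ : (Function.support fun p : V × V => if p.1 = u ∧ p.2 = v then (1 : ℝ) else 0)
      ⊆ {(u, v)} := by
    intro p hp
    by_contra hne
    exact hp (if_neg fun h => hne (Prod.ext h.1 h.2))
  constructor
  · simpa using mul_pos ht (sub_pos.2 hAuv)
  · intro x y hxy
    have hne : ¬(x = u ∧ y = v) := fun h => hxy (Prod.ext h.1 h.2)
    simpa [hne] using mul_nonneg ht.le (hA.mem_Icc x y).1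
  · refine (hA.finite_support.insert (u, v)).subset fun p hp => ?_
    by_cases hpuv : p = (u, v)
    · exact Or.inl hpuv
    · refine Or.inr fun hAp => hp ?_
      have hne : ¬(p.1 = u ∧ p.2 = v) := fun h => hpuv (Prod.ext h.1 h.2)
      simp [hne, hAp]
  · have hδ_sum : ∑ᶠ p : V × V, (if p.1 = u ∧ p.2 = v then (1 : ℝ) else 0) = 1 := by
      rw [finsum_eq_single _ (u, v) fun p hp => Function.notMem_support.1 fun h => hp (hδ h)]
      simp
    rw [← mul_finsum, finsum_sub_distrib ((Set.finite_singleton _).subset hδ) hA.finite_support,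
      hδ_sum, hA.finsum_eq_finsum_fst, hmass, sub_self, mul_zero]
  · intro x hx
    simp only [hx, false_and, if_false, zero_sub, mul_neg]
    rw [finsum_neg_distrib, ← mul_finsum, hA.marginal_fst, h₁ x hx]
  · intro y hy
    simp only [hy, and_false, if_false, zero_sub, mul_neg]
    rw [finsum_neg_distrib, ← mul_finsum, hA.marginal_snd, h₂ y hy]

end IsCoupling

end RicciWeighted

open RicciWeighted in
/-- Let `u ∼ v`, `α ∈ [0,1)` and let `A` be a coupling between
`μ_u^α` and `μ_v^α` with `A(u,v) < 1`.  Then `B = (1/(1−α))(𝟙_{(u,v)} − A)` is a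
`∗`-coupling between `μ_u` and `μ_v`. -/
theorem star_coupling_of_coupling
    {V : Type*} (G : SimpleGraph V) [∀ v : V, Fintype (G.neighborSet v)]
    (hconn : G.Connected)
    (d w : V → V → ℝ)
    (hd_symm : ∀ x y : V, d x y = d y x)
    (hd_pos : ∀ x y : V, G.Adj x y → 0 < d x y)
    (hw_symm : ∀ x y : V, w x y = w y x)
    (hw_pos : ∀ x y : V, G.Adj x y → 0 < w x y)
    (u v : V) (huv : G.Adj u v)
    (α : ℝ) (hα : α ∈ Set.Ico (0 : ℝ) 1)
    (A : V → V → ℝ) (hA : IsCoupling (mu G w α u) (mu G w α v) A)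
    (hAuv : A u v < 1) :
    IsStarCoupling (mu G w 0 u) (mu G w 0 v) u v
      (fun x y => (1 / (1 - α)) * ((if x = u ∧ y = v then (1 : ℝ) else 0) - A x y)) := by
  have hα' : 0 < 1 - α := sub_pos.2 hα.2
  have hrescale : ∀ x z : V, z ≠ x → 1 / (1 - α) * mu G w α x z = mu G w 0 x z := by
    intro x z hz
    rw [mu_apply_eq_mul_mu_zero α hz]
    field_simp [hα'.ne']
  exact hA.isStarCoupling (one_div_pos.2 hα')
    (finsum_mu_eq_one α (deg_pos hw_pos huv).ne') hAuv (hrescale u) (hrescale v)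
end
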